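/- arXiv:2510.11229 — 2 statements merged into one kernel-verified Lean document; each statement's English description precedes it below -/
import Mathlib

section
/- Let A ∈ ℛ, and let X, X′ ≥ 0 be random vectors in ℝ^d with distributions F, G respectively. Suppose F ∈ 𝒮_A and ℙ(X ∈ x·A) / ℙ(X′ ∈ x·A) → c₀ as x → ∞ for some constant c₀ ∈ (0,∞). Then G ∈ 𝒮_A. -/
open MeasureTheory ProbabilityTheory Filter Set Topology
open scoped Pointwise ENNReal NNReal

/-- A set `A ⊆ ℝ^d` is increasing if `a ∈ A` and `y ≥ 0` imply `a + y ∈ A`. -/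
def IncreasingSet {d : ℕ} (A : Set (Fin d → ℝ)) : Prop :=
  ∀ a ∈ A, ∀ y : Fin d → ℝ, 0 ≤ y → a + y ∈ A

/-- The family `ℛ` of proper open increasing subsets of `ℝ^d` with convex complement
whose closure does not contain the origin. -/
def MemR {d : ℕ} (A : Set (Fin d → ℝ)) : Prop :=
  A ≠ Set.univ ∧ IsOpen A ∧ IncreasingSet A ∧ Convex ℝ Aᶜ ∧ (0 : Fin d → ℝ) ∉ closure A

/-- The translate `A + w = {a + w : a ∈ A}`. -/
def shiftSet {d : ℕ} (A : Set (Fin d → ℝ)) (w : Fin d → ℝ) : Set (Fin d → ℝ) :=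
  (fun a => a + w) '' A

/-- The tail `V̄(x) = V((x,∞))` of a measure on `ℝ`, as a real number. -/
noncomputable def tailR (V : Measure ℝ) (x : ℝ) : ℝ := (V (Set.Ioi x)).toReal

/-- A probability distribution on `ℝ` is long-tailed if its tail is everywhere positive and
`V̄(x-y)/V̄(x) → 1` as `x → ∞`, for every `y > 0`. -/
def IsLongTailed (V : Measure ℝ) : Prop :=
  (∀ x : ℝ, 0 < V (Set.Ioi x)) ∧
    ∀ y : ℝ, 0 < y → Tendsto (fun x => tailR V (x - y) / tailR V x) atTop (nhds 1)

/-- The (additive) convolution of two measures on `ℝ`. -/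
noncomputable def convAdd (μ ν : Measure ℝ) : Measure ℝ :=
  (μ.prod ν).map (fun p => p.1 + p.2)

/-- A probability distribution on `ℝ` is subexponential if it is supported on `[0,∞)`, its tail
is everywhere positive, and `(V∗V)((x,∞))/V̄(x) → 2` as `x → ∞`. -/
def IsSubexponential (V : Measure ℝ) : Prop :=
  V (Set.Iio 0) = 0 ∧ (∀ x : ℝ, 0 < V (Set.Ioi x)) ∧
    Tendsto (fun x => (convAdd V V (Set.Ioi x)).toReal / tailR V x) atTop (nhds 2)

/-- A probability distribution on `ℝ` is dominatedly varying if its tail is everywhere positive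
and `limsup_{x→∞} V̄(bx)/V̄(x) < ∞` for every `b ∈ (0,1)`. -/
def IsDomVarying (V : Measure ℝ) : Prop :=
  (∀ x : ℝ, 0 < V (Set.Ioi x)) ∧
    ∀ b : ℝ, b ∈ Set.Ioo (0 : ℝ) 1 →
      IsBoundedUnder (· ≤ ·) atTop (fun x => tailR V (b * x) / tailR V x)

/-- `Y_A(z) = sup{u > 0 : z ∈ u·A}` (with `sup ∅ = 0`). -/
noncomputable def YofA {d : ℕ} (A : Set (Fin d → ℝ)) (z : Fin d → ℝ) : ℝ :=
  sSup {u : ℝ | 0 < u ∧ z ∈ u • A}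

/-- `V` is the integrated-tail distribution `F_{I,A}` of the claim vector `X` (with law `F`
under `P`), formed with the vector `c` and normalizing constant `Θ`: it is a probability
measure on `ℝ` whose tail is `min(1, H(x)/Θ)` for `x > 0`, where
`H(x) = ∫₀^∞ ℙ(X ∈ x·A + v·c) dv`, and equals `1` for `x ≤ 0`. -/
def IsIntegratedTail {d : ℕ} {Ω : Type*} [MeasurableSpace Ω] (P : Measure Ω)
    (X : Ω → Fin d → ℝ) (A : Set (Fin d → ℝ)) (c : Fin d → ℝ) (Θ : ℝ)
    (V : Measure ℝ) : Prop :=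
  IsProbabilityMeasure V ∧
    (∀ x : ℝ, 0 < x →
      tailR V x =
        min 1 ((∫ v in Set.Ioi (0 : ℝ), (P (X ⁻¹' shiftSet (x • A) (v • c))).toReal) / Θ)) ∧
    (∀ x : ℝ, x ≤ 0 → V (Set.Ioi x) = 1)

/-!
For `x > 0` and `z ≥ 0` one has `x < Y_A(z) ↔ z ∈ x • A`, so the laws `V`, `W` of `Y_A(X)` and
`Y_A(X')` live on `[0, ∞)` and have tails `ℙ(X ∈ x • A)` and `ℙ(X' ∈ x • A)`: the claim is the
closure of the subexponential class under tail equivalence.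

`W` inherits long-tailedness from the subexponential `V`. If one summand is at most `T`, the
other exceeds `x - T`, so `(W∗W)(x, ∞) ≤ 2 W̄(x - T) + (W⊗W)(both summands > T, sum > x)`. Beyond
some `T₀` the tail of `W` is at most `k` times that of `V`, which bounds the last term by `k²`
times the same `V⊗V`-mass, and the latter is at most
`(V∗V)(x, ∞) - 2 V̄(x) V[0, T] = (2 V̄(T) + o(1)) V̄(x)`. Letting `x → ∞` and then `T → ∞` gives
`limsup (W∗W)(x, ∞) / W̄(x) ≤ 2`; the matching lower bound `(W∗W)(x, ∞) ≥ 2 W̄(x) W[0, x]` holds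
for every distribution on `[0, ∞)`.
-/

section Geometry

variable {d : ℕ} {A : Set (Fin d → ℝ)}

lemma exists_pos_le_norm_of_zero_notMem_closure (h0 : (0 : Fin d → ℝ) ∉ closure A) :
    ∃ ε > 0, ∀ z ∈ A, ε ≤ ‖z‖ := by
  obtain ⟨ε, hε, hball⟩ := Metric.isOpen_iff.1 isClosed_closure.isOpen_compl 0 h0
  refine ⟨ε, hε, fun z hz => not_lt.1 fun hlt => hball ?_ (subset_closure hz)⟩
  rwa [Metric.mem_ball, dist_zero_right]

lemma bddAbove_scales_of_zero_notMem_closure (h0 : (0 : Fin d → ℝ) ∉ closure A)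
    (z : Fin d → ℝ) : BddAbove {u : ℝ | 0 < u ∧ z ∈ u • A} := by
  obtain ⟨ε, hε, hA⟩ := exists_pos_le_norm_of_zero_notMem_closure h0
  refine ⟨‖z‖ / ε, fun u ⟨hu, hz⟩ => ?_⟩
  rw [mem_smul_set_iff_inv_smul_mem₀ hu.ne'] at hz
  have := hA _ hz
  rw [norm_smul, norm_inv, Real.norm_of_nonneg hu.le, inv_mul_eq_div, le_div_iff₀ hu] at this
  rwa [le_div_iff₀ hε, mul_comm]

lemma IncreasingSet.mem_smul_of_le (hA : IncreasingSet A) {z : Fin d → ℝ} (hz : 0 ≤ z)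
    {u v : ℝ} (hu : 0 < u) (huv : u ≤ v) (hzv : z ∈ v • A) : z ∈ u • A := by
  have hv := hu.trans_le huv
  rw [mem_smul_set_iff_inv_smul_mem₀ hv.ne'] at hzv
  rw [mem_smul_set_iff_inv_smul_mem₀ hu.ne', ← add_sub_cancel (v⁻¹ • z) (u⁻¹ • z), ← sub_smul]
  exact hA _ hzv _ (smul_nonneg (sub_nonneg.2 (inv_anti₀ hu huv)) hz)

lemma YofA_nonneg (z : Fin d → ℝ) : 0 ≤ YofA A z :=
  Real.sSup_nonneg fun _ hu => hu.1.le

lemma lt_YofA_iff_exists (h0 : (0 : Fin d → ℝ) ∉ closure A) {z : Fin d → ℝ} {x : ℝ}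
    (hx : 0 ≤ x) : x < YofA A z ↔ ∃ u, x < u ∧ z ∈ u • A := by
  constructor
  · intro h
    rcases eq_empty_or_nonempty {u : ℝ | 0 < u ∧ z ∈ u • A} with hS | hS
    · rw [YofA, hS, Real.sSup_empty] at h
      exact absurd h hx.not_gt
    obtain ⟨u, hu, hxu⟩ := exists_lt_of_lt_csSup hS h
    exact ⟨u, hxu, hu.2⟩
  · rintro ⟨u, hxu, hz⟩
    exact hxu.trans_le
      (le_csSup (bddAbove_scales_of_zero_notMem_closure h0 z) ⟨hx.trans_lt hxu, hz⟩)

lemma MemR.lowerSemicontinuous_YofA (hA : MemR A) : LowerSemicontinuous (YofA A) := by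
  refine lowerSemicontinuous_iff_isOpen_preimage.2 fun x => ?_
  rcases lt_or_ge x 0 with hx | hx
  · convert isOpen_univ
    exact eq_univ_of_forall fun z => hx.trans_le (YofA_nonneg z)
  · have : YofA A ⁻¹' Ioi x = ⋃ u ∈ Ioi x, u • A := by
      ext z
      simp [lt_YofA_iff_exists hA.2.2.2.2 hx]
    rw [this]
    exact isOpen_biUnion fun u hu => hA.2.1.smul₀ (hx.trans_lt hu).ne'

lemma MemR.lt_YofA_iff (hA : MemR A) {z : Fin d → ℝ} (hz : 0 ≤ z) {x : ℝ} (hx : 0 < x) :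
    x < YofA A z ↔ z ∈ x • A := by
  rw [lt_YofA_iff_exists hA.2.2.2.2 hx.le]
  constructor
  · rintro ⟨u, hxu, hzu⟩
    exact hA.2.2.1.mem_smul_of_le hz hx hxu.le hzu
  · intro h
    rw [mem_smul_set_iff_inv_smul_mem₀ hx.ne'] at h
    have hnhds : ∀ᶠ u in 𝓝 x, u⁻¹ • z ∈ A :=
      ((continuousAt_inv₀ hx.ne').smul continuousAt_const).preimage_mem_nhds
        (hA.2.1.mem_nhds h)
    obtain ⟨u, hzu, hxu⟩ :=
      ((eventually_nhdsWithin_of_eventually_nhds (s := Ioi x) hnhds).and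
        self_mem_nhdsWithin).exists
    exact ⟨u, hxu, (mem_smul_set_iff_inv_smul_mem₀ (hx.trans hxu).ne' _ _).2 hzu⟩

lemma MemR.measurable_YofA (hA : MemR A) : Measurable (YofA A) :=
  hA.lowerSemicontinuous_YofA.measurable

end Geometry

section Pushforward

variable {d : ℕ} {A : Set (Fin d → ℝ)} {Ω : Type*} [MeasurableSpace Ω] (P : Measure Ω)
  {X : Ω → Fin d → ℝ}

lemma map_YofA_Iio_zero (hA : MemR A) (hX : Measurable X) :
    (P.map fun ω => YofA A (X ω)) (Iio 0) = 0 := by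
  rw [Measure.map_apply (f := fun ω => YofA A (X ω)) (hA.measurable_YofA.comp hX)
    measurableSet_Iio]
  convert measure_empty (μ := P)
  exact eq_empty_of_forall_notMem fun ω h => (YofA_nonneg (X ω)).not_gt h

lemma tailR_map_YofA (hA : MemR A) (hX : Measurable X) (hX0 : ∀ ω, 0 ≤ X ω) {x : ℝ}
    (hx : 0 < x) : tailR (P.map fun ω => YofA A (X ω)) x = (P (X ⁻¹' (x • A))).toReal := by
  rw [tailR, Measure.map_apply (f := fun ω => YofA A (X ω)) (hA.measurable_YofA.comp hX)
    measurableSet_Ioi]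
  congr 2
  ext ω
  exact hA.lt_YofA_iff (hX0 ω) hx

end Pushforward

section Tails

variable {μ : Measure ℝ}

lemma tailR_eq_measureReal (x : ℝ) : tailR μ x = μ.real (Ioi x) := rfl

lemma tailR_antitone [IsFiniteMeasure μ] : Antitone (tailR μ) := fun _ _ hab =>
  measureReal_mono (Ioi_subset_Ioi hab)

lemma tailR_pos [IsFiniteMeasure μ] {x : ℝ} (h : 0 < μ (Ioi x)) : 0 < tailR μ x :=
  ENNReal.toReal_pos h.ne' (measure_ne_top μ _)

lemma tendsto_tailR_atTop [IsFiniteMeasure μ] : Tendsto (tailR μ) atTop (𝓝 0) := by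
  have h := tendsto_measure_iInter_atTop (μ := μ) (s := fun x : ℝ => Ioi x)
    (fun _ => measurableSet_Ioi.nullMeasurableSet) (fun _ _ hab => Ioi_subset_Ioi hab)
    ⟨0, measure_ne_top μ _⟩
  have hempty : ⋂ x : ℝ, Ioi x = ∅ := iInter_eq_empty_iff.2 fun t => ⟨t, lt_irrefl t⟩
  rw [hempty, measure_empty] at h
  have h' := (ENNReal.tendsto_toReal ENNReal.zero_ne_top).comp h
  rwa [ENNReal.toReal_zero] at h'

lemma measureReal_Icc_zero_eq [IsProbabilityMeasure μ] (hμ : μ (Iio 0) = 0) {T : ℝ}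
    (hT : 0 ≤ T) : μ.real (Icc 0 T) = 1 - tailR μ T := by
  have h := measureReal_union (μ := μ) (s₁ := Icc 0 T)
    (disjoint_left.2 fun a ha ha' => ha.2.not_gt ha') (s₂ := Ioi T) measurableSet_Ioi
  rw [Icc_union_Ioi_eq_Ici hT, ← compl_Iio, probReal_compl_eq_one_sub measurableSet_Iio,
    measureReal_def, hμ] at h
  rw [tailR_eq_measureReal]
  simp at h
  linarith

lemma measureReal_Ioc_eq [IsFiniteMeasure μ] {a b : ℝ} (hab : a ≤ b) :
    μ.real (Ioc a b) = tailR μ a - tailR μ b := by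
  have h := measureReal_union (μ := μ) (s₁ := Ioc a b)
    (disjoint_left.2 fun t ht ht' => ht.2.not_gt ht') (s₂ := Ioi b) measurableSet_Ioi
  rw [Ioc_union_Ioi_eq_Ioi hab] at h
  simp only [tailR_eq_measureReal, h, add_sub_cancel_right]

lemma measure_Ioi_pos_of_tendsto_tailR_div {ν : Measure ℝ} {c : ℝ} (hc : c ≠ 0)
    (h : Tendsto (fun x => tailR ν x / tailR μ x) atTop (𝓝 c)) (x : ℝ) : 0 < μ (Ioi x) := by
  refine pos_iff_ne_zero.2 fun hx => hc (tendsto_nhds_unique h (tendsto_const_nhds.congr' ?_))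
  filter_upwards [eventually_ge_atTop x] with t ht
  rw [tailR, tailR, measure_mono_null (Ioi_subset_Ioi ht) hx, ENNReal.toReal_zero, div_zero]

end Tails

section Convolution

instance isProbabilityMeasure_convAdd (μ ν : Measure ℝ) [IsProbabilityMeasure μ]
    [IsProbabilityMeasure ν] : IsProbabilityMeasure (convAdd μ ν) :=
  Measure.isProbabilityMeasure_map (measurable_fst.add measurable_snd).aemeasurable

lemma measureReal_convAdd_Ioi (μ ν : Measure ℝ) (x : ℝ) :
    (convAdd μ ν).real (Ioi x) = (μ.prod ν).real {p | x < p.1 + p.2} := by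
  rw [measureReal_def, convAdd, Measure.map_apply (by fun_prop) measurableSet_Ioi]
  rfl

lemma measureReal_add_add_le_convAdd (μ ν : Measure ℝ) [IsFiniteMeasure μ] [IsFiniteMeasure ν]
    {x : ℝ} {s t u : Set (ℝ × ℝ)} (ht : MeasurableSet t) (hu : MeasurableSet u)
    (hst : Disjoint s t) (hstu : Disjoint (s ∪ t) u) (hsub : s ∪ t ∪ u ⊆ {p | x < p.1 + p.2}) :
    (μ.prod ν).real s + (μ.prod ν).real t + (μ.prod ν).real u ≤ (convAdd μ ν).real (Ioi x) := by
  rw [← measureReal_union hst ht, ← measureReal_union hstu hu, measureReal_convAdd_Ioi]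
  exact measureReal_mono hsub

def bothLarge (T x : ℝ) : Set (ℝ × ℝ) := {p | T < p.1 ∧ T < p.2 ∧ x < p.1 + p.2}

lemma measurableSet_bothLarge (T x : ℝ) : MeasurableSet (bothLarge T x) :=
  (measurableSet_lt measurable_const measurable_fst).inter
    ((measurableSet_lt measurable_const measurable_snd).inter
      (measurableSet_lt measurable_const (measurable_fst.add measurable_snd)))

lemma measureReal_convAdd_Ioi_le (μ : Measure ℝ) [IsProbabilityMeasure μ] (T x : ℝ) :
    (convAdd μ μ).real (Ioi x) ≤ 2 * tailR μ (x - T) + (μ.prod μ).real (bothLarge T x) := by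
  have hsub : {p : ℝ × ℝ | x < p.1 + p.2} ⊆
      Ioi (x - T) ×ˢ univ ∪ univ ×ˢ Ioi (x - T) ∪ bothLarge T x := by
    rintro ⟨a, b⟩ (h : x < a + b)
    by_cases ha : T < a
    · by_cases hb : T < b
      · exact Or.inr ⟨ha, hb, h⟩
      · exact Or.inl (Or.inl ⟨show x - T < a by linarith, trivial⟩)
    · exact Or.inl (Or.inr ⟨trivial, show x - T < b by linarith⟩)
  calc (convAdd μ μ).real (Ioi x)
      ≤ (μ.prod μ).real (Ioi (x - T) ×ˢ univ ∪ univ ×ˢ Ioi (x - T) ∪ bothLarge T x) := by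
        rw [measureReal_convAdd_Ioi]; exact measureReal_mono hsub
    _ ≤ (μ.prod μ).real (Ioi (x - T) ×ˢ univ) + (μ.prod μ).real (univ ×ˢ Ioi (x - T))
          + (μ.prod μ).real (bothLarge T x) :=
        (measureReal_union_le _ _).trans (by gcongr; exact measureReal_union_le _ _)
    _ = 2 * tailR μ (x - T) + (μ.prod μ).real (bothLarge T x) := by
        simp only [measureReal_prod_prod, probReal_univ, tailR_eq_measureReal]; ring

lemma two_mul_tailR_mul_add_le_measureReal_convAdd (μ : Measure ℝ) [IsFiniteMeasure μ]
    {T x : ℝ} (hTx : T ≤ x) :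
    2 * (tailR μ x * μ.real (Icc 0 T)) + (μ.prod μ).real (bothLarge T x) ≤
      (convAdd μ μ).real (Ioi x) := by
  have h := measureReal_add_add_le_convAdd μ μ (x := x) (s := Ioi x ×ˢ Icc 0 T)
    (t := Icc 0 T ×ˢ Ioi x)
    (measurableSet_Icc.prod measurableSet_Ioi) (measurableSet_bothLarge T x)
    (disjoint_prod.2 (Or.inl (disjoint_left.2 fun a ha ha' => ha'.2.not_gt (hTx.trans_lt ha))))
    (disjoint_left.2 ?_) ?_
  · simp only [measureReal_prod_prod] at h
    rw [tailR_eq_measureReal]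
    linarith
  · rintro ⟨a, b⟩ (⟨-, hb⟩ | ⟨ha, -⟩) ⟨ha', hb', -⟩
    exacts [hb.2.not_gt hb', ha.2.not_gt ha']
  · rintro ⟨a, b⟩ ((⟨ha, hb⟩ | ⟨ha, hb⟩) | ⟨-, -, h⟩)
    exacts [show x < a + b by linarith [hb.1, ha.out], show x < a + b by linarith [ha.1, hb.out], h]

lemma tailR_mul_add_le_measureReal_convAdd (μ : Measure ℝ) [IsProbabilityMeasure μ]
    (hμ : μ (Iio 0) = 0) {T x : ℝ} (hTx : T ≤ x) :
    tailR μ x * (1 + μ.real (Icc 0 T)) + μ.real (Ioc T x) * tailR μ (x - T) ≤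
      (convAdd μ μ).real (Ioi x) := by
  have hIci : μ.real (Ici 0) = 1 := by
    rw [← compl_Iio, probReal_compl_eq_one_sub measurableSet_Iio, measureReal_def, hμ]; simp
  have h := measureReal_add_add_le_convAdd μ μ (x := x) (s := Ioi x ×ˢ Ici 0)
    (t := Icc 0 T ×ˢ Ioi x) (u := Ioc T x ×ˢ Ioi (x - T))
    (measurableSet_Icc.prod measurableSet_Ioi) (measurableSet_Ioc.prod measurableSet_Ioi)
    (disjoint_prod.2 (Or.inl (disjoint_left.2 fun a ha ha' => ha'.2.not_gt (hTx.trans_lt ha))))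
    (disjoint_union_left.2 ⟨disjoint_prod.2 (Or.inl (disjoint_left.2 fun a ha ha' =>
      ha'.2.not_gt ha)), disjoint_prod.2 (Or.inl (disjoint_left.2 fun a ha ha' =>
      ha'.1.not_ge ha.2))⟩) ?_
  · simp only [measureReal_prod_prod, hIci] at h
    simp only [tailR_eq_measureReal]
    linarith
  · rintro ⟨a, b⟩ ((⟨ha, hb⟩ | ⟨ha, hb⟩) | ⟨ha, hb⟩)
    · show x < a + b; linarith [ha.out, hb.out]
    · show x < a + b; linarith [ha.1, hb.out]
    · show x < a + b; linarith [ha.1, hb.out]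

end Convolution

section Domination

lemma prod_bothLarge_eq_setLIntegral (μ ν : Measure ℝ) [SFinite ν] (T x : ℝ) :
    μ.prod ν (bothLarge T x) = ∫⁻ t in Ioi T, ν (Ioi (max T (x - t))) ∂μ := by
  rw [Measure.prod_apply (measurableSet_bothLarge T x), ← lintegral_indicator measurableSet_Ioi]
  congr 1
  ext t
  by_cases ht : T < t
  · rw [indicator_of_mem (mem_Ioi.2 ht)]
    congr 1
    ext b
    simp only [bothLarge, mem_preimage, mem_ofPred_eq, mem_Ioi, max_lt_iff, sub_lt_iff_lt_add']
    tauto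
  · rw [indicator_of_notMem (notMem_Ioi.2 (not_lt.1 ht))]
    simp [bothLarge, ht]

lemma prod_bothLarge_comm (μ ν : Measure ℝ) [SFinite μ] [SFinite ν] (T x : ℝ) :
    μ.prod ν (bothLarge T x) = ν.prod μ (bothLarge T x) := by
  rw [← Measure.prod_swap, Measure.map_apply measurable_swap (measurableSet_bothLarge T x)]
  congr 1
  ext ⟨a, b⟩
  simp only [bothLarge, mem_preimage, Prod.swap_prod_mk, mem_ofPred_eq, add_comm a b]
  tauto

lemma prod_bothLarge_le_mul (μ ν₁ ν₂ : Measure ℝ) [SFinite ν₁] [SFinite ν₂] {T : ℝ}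
    {K : ℝ≥0∞} (hK : K ≠ ∞) (h : ∀ t, T ≤ t → ν₁ (Ioi t) ≤ K * ν₂ (Ioi t)) (x : ℝ) :
    μ.prod ν₁ (bothLarge T x) ≤ K * μ.prod ν₂ (bothLarge T x) := by
  rw [prod_bothLarge_eq_setLIntegral, prod_bothLarge_eq_setLIntegral,
    ← lintegral_const_mul' _ _ hK]
  exact setLIntegral_mono' measurableSet_Ioi fun t _ => h _ (le_max_left _ _)

lemma measureReal_prod_bothLarge_le_sq_mul (μ ν : Measure ℝ) [IsFiniteMeasure μ]
    [IsFiniteMeasure ν] {T k : ℝ} (hk : 0 ≤ k) (h : ∀ t, T ≤ t → tailR μ t ≤ k * tailR ν t)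
    (x : ℝ) :
    (μ.prod μ).real (bothLarge T x) ≤ k ^ 2 * (ν.prod ν).real (bothLarge T x) := by
  have hE : ∀ t, T ≤ t → μ (Ioi t) ≤ ENNReal.ofReal k * ν (Ioi t) := fun t ht => by
    rw [← ofReal_measureReal, ← ofReal_measureReal, ← ENNReal.ofReal_mul hk]
    exact ENNReal.ofReal_le_ofReal (h t ht)
  have key : μ.prod μ (bothLarge T x) ≤ ENNReal.ofReal (k ^ 2) * ν.prod ν (bothLarge T x) :=
    calc μ.prod μ (bothLarge T x)
        ≤ ENNReal.ofReal k * μ.prod ν (bothLarge T x) :=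
          prod_bothLarge_le_mul μ μ ν ENNReal.ofReal_ne_top hE x
      _ = ENNReal.ofReal k * ν.prod μ (bothLarge T x) := by rw [prod_bothLarge_comm]
      _ ≤ ENNReal.ofReal k * (ENNReal.ofReal k * ν.prod ν (bothLarge T x)) := by
          gcongr; exact prod_bothLarge_le_mul ν μ ν ENNReal.ofReal_ne_top hE x
      _ = ENNReal.ofReal (k ^ 2) * ν.prod ν (bothLarge T x) := by
          rw [← mul_assoc, ← ENNReal.ofReal_mul hk, sq]
  simpa [measureReal_def, ENNReal.toReal_mul, hk] using
    ENNReal.toReal_mono (by finiteness) key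

end Domination

lemma IsSubexponential.isLongTailed {V : Measure ℝ} [IsProbabilityMeasure V]
    (hV : IsSubexponential V) : IsLongTailed V := by
  obtain ⟨hV0, hVpos, hconv⟩ := hV
  refine ⟨hVpos, fun T hT => ?_⟩
  have hpos : ∀ x, 0 < tailR V x := fun x => tailR_pos (μ := V) (hVpos x)
  have hupper : ∀ᶠ x in atTop, tailR V (x - T) / tailR V x ≤
      ((convAdd V V).real (Ioi x) / tailR V x - 2 + tailR V T) / (tailR V T - tailR V x) := by
    filter_upwards [eventually_ge_atTop T,
      (tendsto_tailR_atTop (μ := V)).eventually_lt_const (hpos T)] with x hTx hx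
    have h := tailR_mul_add_le_measureReal_convAdd V hV0 hTx
    rw [measureReal_Icc_zero_eq hV0 hT.le, measureReal_Ioc_eq hTx] at h
    rw [le_div_iff₀ (sub_pos.2 hx), div_mul_eq_mul_div, div_le_iff₀ (hpos x), sub_add,
      sub_mul, div_mul_cancel₀ _ (hpos x).ne']
    linarith
  have hlim : Tendsto (fun x => ((convAdd V V).real (Ioi x) / tailR V x - 2 + tailR V T) /
      (tailR V T - tailR V x)) atTop (𝓝 1) := by
    have := ((hconv.sub_const 2).add_const (tailR V T)).div
      ((tendsto_tailR_atTop (μ := V)).const_sub (tailR V T)) (by simpa using (hpos T).ne')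
    rwa [sub_self, zero_add, sub_zero, div_self (hpos T).ne'] at this
  refine tendsto_of_tendsto_of_tendsto_of_le_of_le' tendsto_const_nhds hlim
    (Eventually.of_forall fun x => ?_) hupper
  exact (one_le_div (hpos x)).2 (tailR_antitone (by linarith))

lemma IsLongTailed.of_tendsto_tailR_div {V W : Measure ℝ} [IsFiniteMeasure V] [IsFiniteMeasure W]
    (hV : IsLongTailed V) (hW : ∀ x, 0 < W (Ioi x)) {c : ℝ} (hc : c ≠ 0)
    (h : Tendsto (fun x => tailR V x / tailR W x) atTop (𝓝 c)) : IsLongTailed W := by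
  refine ⟨hW, fun T hT => ?_⟩
  have hshift := h.comp (tendsto_atTop_add_const_right atTop (-T) tendsto_id)
  have := (hshift.inv₀ hc).mul ((hV.2 T hT).mul h)
  rw [one_mul, inv_mul_cancel₀ hc] at this
  refine this.congr fun x => ?_
  simp only [Function.comp_apply, id, ← sub_eq_add_neg]
  have h1 : tailR V (x - T) ≠ 0 := (tailR_pos (hV.1 _)).ne'
  have h2 : tailR V x ≠ 0 := (tailR_pos (hV.1 x)).ne'
  have h3 : tailR W x ≠ 0 := (tailR_pos (hW x)).ne'
  field_simp

section Transfer

variable {V W : Measure ℝ} [IsProbabilityMeasure V] [IsProbabilityMeasure W]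

lemma le_measureReal_convAdd_div_tailR (hW0 : W (Iio 0) = 0) {x : ℝ} (hx : 0 ≤ x)
    (hWx : 0 < tailR W x) : 2 * (1 - tailR W x) ≤ (convAdd W W).real (Ioi x) / tailR W x := by
  have h := two_mul_tailR_mul_add_le_measureReal_convAdd W (le_refl x)
  rw [measureReal_Icc_zero_eq hW0 hx] at h
  rw [le_div_iff₀ hWx]
  linarith [measureReal_nonneg (μ := W.prod W) (s := bothLarge x x)]

lemma measureReal_convAdd_div_tailR_le (hV0 : V (Iio 0) = 0) {T k : ℝ} (hk : 0 ≤ k)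
    (hdom : ∀ t, T ≤ t → tailR W t ≤ k * tailR V t) (hT : 0 ≤ T) {x : ℝ} (hTx : T ≤ x)
    (hWx : 0 < tailR W x) (hVx : 0 < tailR V x) :
    (convAdd W W).real (Ioi x) / tailR W x ≤
      2 * (tailR W (x - T) / tailR W x) + k ^ 2 *
        ((convAdd V V).real (Ioi x) / tailR V x - 2 * (1 - tailR V T)) *
          (tailR V x / tailR W x) := by
  have hW := measureReal_convAdd_Ioi_le W T x
  have hJ := measureReal_prod_bothLarge_le_sq_mul W V hk hdom x
  have hV := two_mul_tailR_mul_add_le_measureReal_convAdd V hTx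
  rw [measureReal_Icc_zero_eq hV0 hT] at hV
  have hrhs : 2 * (tailR W (x - T) / tailR W x) + k ^ 2 *
        ((convAdd V V).real (Ioi x) / tailR V x - 2 * (1 - tailR V T)) *
          (tailR V x / tailR W x) =
      (2 * tailR W (x - T) + k ^ 2 *
        ((convAdd V V).real (Ioi x) - 2 * (tailR V x * (1 - tailR V T)))) / tailR W x := by
    field_simp
  rw [hrhs, div_le_div_iff_of_pos_right hWx]
  nlinarith [mul_le_mul_of_nonneg_left hV (sq_nonneg k)]

theorem IsSubexponential.of_tendsto_tailR_div (hV : IsSubexponential V) (hW0 : W (Iio 0) = 0)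
    {c : ℝ} (hc : 0 < c) (h : Tendsto (fun x => tailR V x / tailR W x) atTop (𝓝 c)) :
    IsSubexponential W := by
  have hWpos := measure_Ioi_pos_of_tendsto_tailR_div hc.ne' h
  have hWlong := hV.isLongTailed.of_tendsto_tailR_div hWpos hc.ne' h
  set k := c⁻¹ + 1
  obtain ⟨T₀, hdom⟩ : ∃ T₀, ∀ t, T₀ ≤ t → tailR W t ≤ k * tailR V t := by
    have hinv : Tendsto (fun x => tailR W x / tailR V x) atTop (𝓝 c⁻¹) := by
      simpa only [inv_div] using h.inv₀ hc.ne'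
    obtain ⟨T₀, hT₀⟩ := eventually_atTop.1 (hinv.eventually_lt_const (lt_add_one c⁻¹))
    exact ⟨T₀, fun t ht => ((div_lt_iff₀ (tailR_pos (hV.2.1 t))).1 (hT₀ t ht)).le⟩
  refine ⟨hW0, hWpos, tendsto_order.2 ⟨fun b hb => ?_, fun b hb => ?_⟩⟩
  · have hlim : Tendsto (fun x => 2 * (1 - tailR W x)) atTop (𝓝 2) := by
      simpa using ((tendsto_tailR_atTop (μ := W)).const_sub 1).const_mul 2
    filter_upwards [hlim.eventually_const_lt hb, eventually_ge_atTop 0] with x h1 hx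
    exact h1.trans_le (le_measureReal_convAdd_div_tailR hW0 hx (tailR_pos (hWpos x)))
  · have hbound : Tendsto (fun T => 2 + k ^ 2 * (2 * tailR V T) * c) atTop (𝓝 2) := by
      simpa using ((((tendsto_tailR_atTop (μ := V)).const_mul 2).const_mul (k ^ 2)).mul_const
        c).const_add 2
    obtain ⟨T, hTb, hT0, hTT₀⟩ := ((hbound.eventually_lt_const hb).and
      ((eventually_gt_atTop 0).and (eventually_ge_atTop T₀))).exists
    have hlim := ((hWlong.2 T hT0).const_mul 2).add
      (((hV.2.2.sub_const (2 * (1 - tailR V T))).const_mul (k ^ 2)).mul h)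
    rw [show 2 * 1 + k ^ 2 * (2 - 2 * (1 - tailR V T)) * c = 2 + k ^ 2 * (2 * tailR V T) * c
      by ring] at hlim
    filter_upwards [hlim.eventually_lt_const hTb, eventually_ge_atTop T] with x h1 hx
    exact (measureReal_convAdd_div_tailR_le hV.1 (by positivity)
      (fun t ht => hdom t (hTT₀.trans ht)) hT0.le hx (tailR_pos (hWpos x))
      (tailR_pos (hV.2.1 x))).trans_lt h1

end Transfer

/-- **Proposition 2.1(ii), subexponential case.** Let `A ∈ ℛ` and let `X, X'` be nonnegative
random vectors with distributions `F, G`. If `F ∈ 𝒮_A` and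
`ℙ(X ∈ x·A)/ℙ(X' ∈ x·A) → c₀ ∈ (0,∞)`, then `G ∈ 𝒮_A`. -/
theorem subexp_transfer_of_tail_equiv
    {d : ℕ} {Ω₁ Ω₂ : Type*} [MeasurableSpace Ω₁] [MeasurableSpace Ω₂]
    (P₁ : Measure Ω₁) [IsProbabilityMeasure P₁] (P₂ : Measure Ω₂) [IsProbabilityMeasure P₂]
    (A : Set (Fin d → ℝ)) (hA : MemR A)
    (X : Ω₁ → Fin d → ℝ) (hXmeas : Measurable X) (hXnonneg : ∀ ω, 0 ≤ X ω)
    (X' : Ω₂ → Fin d → ℝ) (hX'meas : Measurable X') (hX'nonneg : ∀ ω, 0 ≤ X' ω)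
    (hsub : IsSubexponential (P₁.map fun ω => YofA A (X ω)))
    (c₀ : ℝ) (hc₀ : 0 < c₀)
    (hequiv : Tendsto
      (fun x : ℝ => (P₁ (X ⁻¹' (x • A))).toReal / (P₂ (X' ⁻¹' (x • A))).toReal)
      atTop (nhds c₀)) :
    IsSubexponential (P₂.map fun ω => YofA A (X' ω)) := by
  have : IsProbabilityMeasure (P₁.map fun ω => YofA A (X ω)) :=
    Measure.isProbabilityMeasure_map (hA.measurable_YofA.comp hXmeas).aemeasurable
  have : IsProbabilityMeasure (P₂.map fun ω => YofA A (X' ω)) :=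
    Measure.isProbabilityMeasure_map (hA.measurable_YofA.comp hX'meas).aemeasurable
  refine hsub.of_tendsto_tailR_div (map_YofA_Iio_zero P₂ hA hX'meas) hc₀ (hequiv.congr' ?_)
  filter_upwards [eventually_gt_atTop 0] with x hx
  rw [tailR_map_YofA P₁ hA hXmeas hXnonneg hx, tailR_map_YofA P₂ hA hX'meas hX'nonneg hx]
end

section
/- Let A ∈ ℛ and let X ≥ 0 be a random vector in ℝ^d with distribution F ∈ 𝓛_A. Then for every a ∈ ℝ^d, ℙ(X ∈ x·A + a) / ℙ(X ∈ x·A) → 1 as x → ∞. -/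
open MeasureTheory ProbabilityTheory Filter Set Topology
open scoped Pointwise ENNReal NNReal

/-!
For `x > 0`, `Y_A(z) > x` exactly when `z ∈ x·A`, so `ℙ(X ∈ x·A)` is the tail of `F_A` at `x`.
Since `Aᶜ` is convex and contains `ε·𝟙` for some `ε > 0`, enlarging the scale from `x` to `x + y`
leaves room for every translation of sup-norm at most `yε`: `(x + y)·A + b ⊆ x·A`. Hence, for
`y = (‖a‖ + 1)/ε`, the event `{X ∈ x·A + a}` lies between `{X ∈ (x + y)·A}` and
`{X ∈ (x - y)·A}`, and long-tailedness makes both probabilities `~ ℙ(X ∈ x·A)`.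
-/

/-- `z` is a convex combination of `b` and `z + s • (z - b)`. -/
lemma add_smul_sub_mem_of_convex_compl {E : Type*} [AddCommGroup E] [Module ℝ E] {A : Set E}
    (hA : Convex ℝ Aᶜ) {z b : E} (hz : z ∈ A) (hb : b ∉ A) {s : ℝ} (hs : 0 ≤ s) :
    z + s • (z - b) ∈ A := by
  by_contra h
  have h1s : (0 : ℝ) < 1 + s := by linarith
  have hcomb := hA h hb (a := 1 / (1 + s)) (b := s / (1 + s)) (by positivity) (by positivity)
    (by field_simp)
  have hz_eq : (1 / (1 + s)) • (z + s • (z - b)) + (s / (1 + s)) • b = z := by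
    match_scalars <;> field_simp
    ring
  exact (hz_eq ▸ hcomb) hz

lemma exists_pos_lt_norm_of_zero_notMem_closure {E : Type*} [SeminormedAddCommGroup E]
    {A : Set E} (h0 : (0 : E) ∉ closure A) : ∃ ε > 0, ∀ w ∈ A, ε < ‖w‖ := by
  obtain ⟨ε, hε, hfar⟩ : ∃ ε > 0, ∀ w ∈ A, ε ≤ ‖w‖ := by
    simpa [Metric.mem_closure_iff, dist_zero_left] using h0
  exact ⟨ε / 2, by positivity, fun w hw => by linarith [hfar w hw]⟩

namespace IncreasingSet

variable {d : ℕ} {A : Set (Fin d → ℝ)}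

lemma mem_of_le (hA : IncreasingSet A) {v w : Fin d → ℝ} (hv : v ∈ A) (hvw : v ≤ w) : w ∈ A := by
  simpa using hA v hv (w - v) (sub_nonneg.mpr hvw)

lemma smul (hA : IncreasingSet A) {x : ℝ} (hx : 0 < x) : IncreasingSet (x • A) := by
  rintro _ ⟨w, hw, rfl⟩ v hv
  refine ⟨w + x⁻¹ • v, hA w hw _ (smul_nonneg (inv_nonneg.mpr hx.le) hv), ?_⟩
  simp only [smul_add, smul_inv_smul₀ hx.ne']

end IncreasingSet

section SetsOfClassR

variable {d : ℕ} {A : Set (Fin d → ℝ)}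

lemma mem_smul_of_le (hconv : Convex ℝ Aᶜ) (h0 : (0 : Fin d → ℝ) ∉ A) {z : Fin d → ℝ}
    {u v : ℝ} (hv : 0 < v) (hvu : v ≤ u) (hz : z ∈ u • A) : z ∈ v • A := by
  obtain ⟨w, hw, rfl⟩ := hz
  refine ⟨w + (u / v - 1) • (w - 0), add_smul_sub_mem_of_convex_compl hconv hw h0
    (by rw [sub_nonneg, one_le_div hv]; exact hvu), ?_⟩
  match_scalars
  field_simp
  ring

lemma add_mem_smul_of_norm_le (hinc : IncreasingSet A) (hconv : Convex ℝ Aᶜ)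
    {ε : ℝ} (hε : ε • (1 : Fin d → ℝ) ∉ A) {x y : ℝ} (hx : 0 < x) (hy : 0 ≤ y) {z b : Fin d → ℝ}
    (hz : z ∈ (x + y) • A) (hb : ‖b‖ ≤ y * ε) : z + b ∈ x • A := by
  obtain ⟨w, hw, rfl⟩ := hz
  have hray := add_smul_sub_mem_of_convex_compl hconv hw hε (div_nonneg hy hx.le)
  have hshift : (x + y) • w - (y * ε) • (1 : Fin d → ℝ) ∈ x • A := by
    refine ⟨_, hray, ?_⟩
    match_scalars <;> field_simp
  refine (hinc.smul hx).mem_of_le hshift fun i => ?_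
  have hbi : -(y * ε) ≤ b i := neg_le_of_abs_le ((norm_le_pi_norm b i).trans hb)
  simp only [Pi.add_apply, Pi.sub_apply, Pi.smul_apply, Pi.one_apply, smul_eq_mul, mul_one]
  linarith

lemma smul_add_subset_shiftSet (hinc : IncreasingSet A) (hconv : Convex ℝ Aᶜ) {ε : ℝ}
    (hε : ε • (1 : Fin d → ℝ) ∉ A) {x y : ℝ} (hx : 0 < x) (hy : 0 ≤ y) {a : Fin d → ℝ}
    (ha : ‖a‖ ≤ y * ε) : (x + y) • A ⊆ shiftSet (x • A) a := fun z hz =>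
  ⟨z + -a, add_mem_smul_of_norm_le hinc hconv hε hx hy hz (by rwa [norm_neg]), by simp⟩

lemma shiftSet_subset_smul_sub (hinc : IncreasingSet A) (hconv : Convex ℝ Aᶜ) {ε : ℝ}
    (hε : ε • (1 : Fin d → ℝ) ∉ A) {x y : ℝ} (hy : 0 ≤ y) (hxy : y < x) {a : Fin d → ℝ}
    (ha : ‖a‖ ≤ y * ε) : shiftSet (x • A) a ⊆ (x - y) • A := by
  rintro _ ⟨z, hz, rfl⟩
  exact add_mem_smul_of_norm_le hinc hconv hε (sub_pos.mpr hxy) hy (by rwa [sub_add_cancel]) ha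

end SetsOfClassR

lemma IsLongTailed.tendsto_tailR_add_div {V : Measure ℝ} (hV : IsLongTailed V) {y : ℝ}
    (hy : 0 < y) : Tendsto (fun x => tailR V (x + y) / tailR V x) atTop (𝓝 1) := by
  have h := ((hV.2 y hy).comp (tendsto_atTop_add_const_right atTop y tendsto_id)).inv₀ one_ne_zero
  simpa [Function.comp_def, inv_div] using h

namespace YofA

variable {d : ℕ} {A : Set (Fin d → ℝ)}

lemma bddAbove_setOf_mem_smul {ε : ℝ} (hε₀ : 0 < ε) (hε : ∀ w ∈ A, ε < ‖w‖) (z : Fin d → ℝ) :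
    BddAbove {u : ℝ | 0 < u ∧ z ∈ u • A} := by
  refine ⟨‖z‖ / ε, ?_⟩
  rintro u ⟨hu, w, hw, rfl⟩
  rw [le_div_iff₀ hε₀, norm_smul, Real.norm_of_nonneg hu.le]
  exact mul_le_mul_of_nonneg_left (hε w hw).le hu.le

lemma lt_iff_exists_mem_smul {ε : ℝ} (hε₀ : 0 < ε) (hε : ∀ w ∈ A, ε < ‖w‖) {x : ℝ}
    (hx : 0 ≤ x) (z : Fin d → ℝ) : x < YofA A z ↔ ∃ u, x < u ∧ z ∈ u • A := by
  rcases {u : ℝ | 0 < u ∧ z ∈ u • A}.eq_empty_or_nonempty with hS | hS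
  · rw [YofA, hS, Real.sSup_empty]
    exact ⟨fun h => absurd h hx.not_gt,
      fun ⟨u, hxu, hz⟩ => (hS.subset ⟨hx.trans_lt hxu, hz⟩).elim⟩
  · rw [YofA, lt_csSup_iff (bddAbove_setOf_mem_smul hε₀ hε z) hS]
    exact ⟨fun ⟨u, ⟨_, hz⟩, hxu⟩ => ⟨u, hxu, hz⟩,
      fun ⟨u, hxu, hz⟩ => ⟨u, ⟨hx.trans_lt hxu, hz⟩, hxu⟩⟩

lemma mem_smul_iff_lt (hopen : IsOpen A) (hconv : Convex ℝ Aᶜ) {ε : ℝ} (hε₀ : 0 < ε)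
    (hε : ∀ w ∈ A, ε < ‖w‖) {x : ℝ} (hx : 0 < x) (z : Fin d → ℝ) :
    z ∈ x • A ↔ x < YofA A z := by
  have h0 : (0 : Fin d → ℝ) ∉ A := fun h => (hε₀.trans (hε 0 h)).ne' norm_zero
  rw [lt_iff_exists_mem_smul hε₀ hε hx.le]
  refine ⟨fun hz => ?_, fun ⟨u, hxu, hz⟩ => mem_smul_of_le hconv h0 hx hxu.le hz⟩
  have hnhds : ∀ᶠ u in 𝓝 x, u⁻¹ • z ∈ A :=
    ((continuousAt_inv₀ hx.ne').smul continuousAt_const).preimage_mem_nhds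
      (hopen.mem_nhds ((mem_smul_set_iff_inv_smul_mem₀ hx.ne' _ _).mp hz))
  obtain ⟨u, hxu, hu⟩ := hnhds.exists_gt
  exact ⟨u, hxu, (mem_smul_set_iff_inv_smul_mem₀ (hx.trans hxu).ne' _ _).mpr hu⟩

lemma lowerSemicontinuous (hopen : IsOpen A) {ε : ℝ} (hε₀ : 0 < ε) (hε : ∀ w ∈ A, ε < ‖w‖) :
    LowerSemicontinuous (YofA A) := by
  refine lowerSemicontinuous_iff_isOpen_preimage.mpr fun x => ?_
  rcases lt_or_ge x 0 with hx | hx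
  · convert isOpen_univ
    exact eq_univ_of_forall fun z => hx.trans_le (Real.sSup_nonneg fun _ hu => hu.1.le)
  · have hpre : YofA A ⁻¹' Ioi x = ⋃ u ∈ Ioi x, u • A := by
      ext z
      simp [lt_iff_exists_mem_smul hε₀ hε hx]
    rw [hpre]
    exact isOpen_biUnion fun u hu => hopen.smul₀ (hx.trans_lt hu).ne'

end YofA

theorem longtailed_shift_insensitive_general
    {d : ℕ} {Ω : Type*} [MeasurableSpace Ω] (P : Measure Ω) [IsProbabilityMeasure P]
    (A : Set (Fin d → ℝ)) (hA : MemR A)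
    (X : Ω → Fin d → ℝ) (hXmeas : Measurable X)
    (hlong : IsLongTailed (P.map fun ω => YofA A (X ω))) :
    ∀ a : Fin d → ℝ,
      Tendsto
        (fun x : ℝ => (P (X ⁻¹' shiftSet (x • A) a)).toReal / (P (X ⁻¹' (x • A))).toReal)
        atTop (nhds 1) := by
  intro a
  obtain ⟨-, hopen, hinc, hconv, h0⟩ := hA
  obtain ⟨ε, hε₀, hε⟩ := exists_pos_lt_norm_of_zero_notMem_closure h0
  have hε1 : ε • (1 : Fin d → ℝ) ∉ A := fun h => (hε _ h).not_ge <| by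
    rw [norm_smul, Real.norm_of_nonneg hε₀.le]
    exact mul_le_of_le_one_right hε₀.le ((pi_norm_le_iff_of_nonneg zero_le_one).mpr (by simp))
  have hY : Measurable fun ω => YofA A (X ω) :=
    (YofA.lowerSemicontinuous hopen hε₀ hε).measurable.comp hXmeas
  have htail (x : ℝ) (hx : 0 < x) :
      tailR (P.map fun ω => YofA A (X ω)) x = (P (X ⁻¹' (x • A))).toReal := by
    rw [tailR, Measure.map_apply hY measurableSet_Ioi]
    congr 2
    ext ω
    exact (YofA.mem_smul_iff_lt hopen hconv hε₀ hε hx (X ω)).symm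
  set y := (‖a‖ + 1) / ε
  have hy : 0 < y := by positivity
  have hay : ‖a‖ ≤ y * ε := by rw [div_mul_cancel₀ _ hε₀.ne']; linarith
  refine tendsto_of_tendsto_of_tendsto_of_le_of_le' (hlong.tendsto_tailR_add_div hy)
    (hlong.2 y hy) ?_ ?_
  · filter_upwards [eventually_gt_atTop y] with x hxy
    have hx : 0 < x := hy.trans hxy
    rw [htail _ (by linarith), htail x hx]
    gcongr
    · exact measure_ne_top P _
    · exact smul_add_subset_shiftSet hinc hconv hε1 hx hy.le hay
  · filter_upwards [eventually_gt_atTop y] with x hxy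
    rw [htail _ (sub_pos.mpr hxy), htail x (hy.trans hxy)]
    gcongr
    · exact measure_ne_top P _
    · exact shiftSet_subset_smul_sub hinc hconv hε1 hy.le hxy hay

/-- **Proposition 2.1(iii).** Let `A ∈ ℛ` and `F ∈ 𝓛_A`. Then for every `a ∈ ℝ^d`,
`ℙ(X ∈ x·A + a)/ℙ(X ∈ x·A) → 1` as `x → ∞`. -/
theorem longtailed_shift_insensitive
    {d : ℕ} {Ω : Type*} [MeasurableSpace Ω] (P : Measure Ω) [IsProbabilityMeasure P]
    (A : Set (Fin d → ℝ)) (hA : MemR A)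
    (X : Ω → Fin d → ℝ) (hXmeas : Measurable X) (hXnonneg : ∀ ω, 0 ≤ X ω)
    (hlong : IsLongTailed (P.map fun ω => YofA A (X ω))) :
    ∀ a : Fin d → ℝ,
      Tendsto
        (fun x : ℝ => (P (X ⁻¹' shiftSet (x • A) a)).toReal / (P (X ⁻¹' (x • A))).toReal)
        atTop (nhds 1) :=
  longtailed_shift_insensitive_general P A hA X hXmeas hlong
end
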